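/- arXiv:1210.6209 — 6 statements merged into one kernel-verified Lean document; each statement's English description precedes it below -/
import Mathlib

section
/- Let C be a covering of a finite set U. The lower approximation number is supermodular: for all X, Y ⊆ U, f̲(X) + f̲(Y) ≤ f̲(X ∪ Y) + f̲(X ∩ Y). -/
open Finset

theorem Finset.card_filter_le_supermodular {α : Type*} [Lattice α] [DecidableEq α]
    [DecidableLE α] (C : Finset α) (a b : α) :
    #(C.filter (· ≤ a)) + #(C.filter (· ≤ b)) ≤
      #(C.filter (· ≤ a ⊔ b)) + #(C.filter (· ≤ a ⊓ b)) := by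
  have hunion : C.filter (· ≤ a) ∪ C.filter (· ≤ b) ⊆ C.filter (· ≤ a ⊔ b) := by
    rw [← filter_or]
    exact monotone_filter_right C fun _ _ h => h.elim le_sup_of_le_left le_sup_of_le_right
  have hinter : C.filter (· ≤ a) ∩ C.filter (· ≤ b) = C.filter (· ≤ a ⊓ b) := by
    simp only [← filter_and, le_inf_iff]
  rw [← card_union_add_card_inter, hinter]
  exact Nat.add_le_add_right (card_le_card hunion) _

theorem stmt_6_general {U : Type*} [DecidableEq U]
    (C : Finset (Finset U))
    (X Y : Finset U) :
    (C.filter (fun K => K ⊆ X)).card + (C.filter (fun K => K ⊆ Y)).card ≤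
      (C.filter (fun K => K ⊆ X ∪ Y)).card + (C.filter (fun K => K ⊆ X ∩ Y)).card :=
  C.card_filter_le_supermodular X Y

theorem stmt_6 {U : Type*} [Fintype U] [DecidableEq U]
    (C : Finset (Finset U))
    (hne : ∀ K ∈ C, K.Nonempty)
    (hcov : C.biUnion id = Finset.univ)
    (X Y : Finset U) :
    (C.filter (fun K => K ⊆ X)).card + (C.filter (fun K => K ⊆ Y)).card ≤
      (C.filter (fun K => K ⊆ X ∪ Y)).card + (C.filter (fun K => K ⊆ X ∩ Y)).card :=
  stmt_6_general C X Y
end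

section
/- Let P be a partition of a finite set U. The circuits of the partition-circuit matroid induced by P (which are the blocks of P) are exactly the minimal sets X ⊆ U with lower approximation number equal to 1: P = Min{X ⊆ U : f̲(X) = 1}. -/
namespace Finset

variable {U : Type*} [DecidableEq U] {P : Finset (Finset U)}

theorem filter_subset_eq_singleton_of_mem (hne : ∀ B ∈ P, B.Nonempty)
    (hdisj : ∀ B ∈ P, ∀ B' ∈ P, B ≠ B' → Disjoint B B') {Z : Finset U} (hZ : Z ∈ P) :
    P.filter (fun B => B ⊆ Z) = {Z} := by
  refine eq_singleton_iff_unique_mem.mpr ⟨mem_filter.mpr ⟨hZ, subset_refl Z⟩, ?_⟩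
  rintro B hB
  obtain ⟨hBP, hBZ⟩ := mem_filter.mp hB
  by_contra hBne
  obtain ⟨a, ha⟩ := hne B hBP
  exact disjoint_left.mp (hdisj B hBP Z hZ hBne) ha (hBZ ha)

theorem exists_mem_subset_of_card_filter_subset_eq_one {Y : Finset U}
    (h : (P.filter (fun B => B ⊆ Y)).card = 1) : ∃ B ∈ P, B ⊆ Y := by
  obtain ⟨B, hB⟩ := card_pos.mp (h ▸ Nat.one_pos)
  exact ⟨B, (mem_filter.mp hB).1, (mem_filter.mp hB).2⟩

end Finset

theorem stmt_10_general {U : Type*} [DecidableEq U]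
    (P : Finset (Finset U))
    (hne : ∀ B ∈ P, B.Nonempty)
    (hdisj : ∀ B ∈ P, ∀ B' ∈ P, B ≠ B' → Disjoint B B')
    (X : Finset U) :
    X ∈ P ↔
      ((P.filter (fun B => B ⊆ X)).card = 1 ∧
        ∀ Y : Finset U, (P.filter (fun B => B ⊆ Y)).card = 1 → Y ⊆ X → Y = X) := by
  have hsingle := fun {Z} (hZ : Z ∈ P) => Finset.filter_subset_eq_singleton_of_mem hne hdisj hZ
  constructor
  · intro hX
    refine ⟨by rw [hsingle hX, Finset.card_singleton], fun Y hY hYX => ?_⟩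
    obtain ⟨B, hBP, hBY⟩ := Finset.exists_mem_subset_of_card_filter_subset_eq_one hY
    have hBX : B ∈ P.filter (fun B => B ⊆ X) := Finset.mem_filter.mpr ⟨hBP, hBY.trans hYX⟩
    rw [hsingle hX, Finset.mem_singleton] at hBX
    exact hYX.antisymm (hBX ▸ hBY)
  · rintro ⟨hX, hmin⟩
    obtain ⟨B, hBP, hBX⟩ := Finset.exists_mem_subset_of_card_filter_subset_eq_one hX
    rwa [← hmin B (by rw [hsingle hBP, Finset.card_singleton]) hBX]

theorem stmt_10 {U : Type*} [Fintype U] [DecidableEq U]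
    (P : Finset (Finset U))
    (hne : ∀ B ∈ P, B.Nonempty)
    (hdisj : ∀ B ∈ P, ∀ B' ∈ P, B ≠ B' → Disjoint B B')
    (hcov : P.biUnion id = Finset.univ)
    (X : Finset U) :
    X ∈ P ↔
      ((P.filter (fun B => B ⊆ X)).card = 1 ∧
        ∀ Y : Finset U, (P.filter (fun B => B ⊆ Y)).card = 1 → Y ⊆ X → Y = X) :=
  stmt_10_general P hne hdisj X
end

section
/- Let P be a partition of a finite set U and M_P the partition-circuit matroid induced by P. Then for all X ⊆ U, the closure satisfies cl(X) = X ∪ {x ∈ Xᶜ : f̲(X ∪ {x}) = f̲(X) + 1}. -/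
/-!
For blocks that are pairwise disjoint and nonempty, the rank of the partition-circuit matroid is
`r(X) = |X| - f̲(X)`: an independent `I ⊆ X` must miss a point of every block inside `X`, and
these points are distinct, while deleting one chosen point from each block inside `X` leaves an
independent set. Adding a point `u ∉ X` raises `|X|` by one and `f̲(X)` by at most one (only the
block through `u` can be completed), so the rank stays the same exactly when `f̲` goes up by one.
-/

open Finset

/-- Rank function of the partition-circuit matroid induced by `P`. -/
def pcRank {U : Type*} [DecidableEq U] (P : Finset (Finset U)) (X : Finset U) : ℕ :=
  (X.powerset.filter (fun I => ∀ B ∈ P, ¬ B ⊆ I)).sup Finset.card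

/-- Closure operator of the partition-circuit matroid induced by `P`. -/
def pcCl {U : Type*} [Fintype U] [DecidableEq U] (P : Finset (Finset U)) (X : Finset U) :
    Finset U :=
  Finset.univ.filter (fun u => pcRank P (insert u X) = pcRank P X)

theorem card_le_card_of_pairwiseDisjoint_of_inter_nonempty {α : Type*} [DecidableEq α]
    {Q : Finset (Finset α)} {T : Finset α} (hQ : (Q : Set (Finset α)).PairwiseDisjoint id)
    (hT : ∀ B ∈ Q, (B ∩ T).Nonempty) : #Q ≤ #T :=
  (card_le_card_biUnion (hQ.mono fun _ => inter_subset_left) hT).trans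
    (card_le_card (biUnion_subset.2 fun _ _ => inter_subset_right))

section PartitionCircuitMatroid

variable {U : Type*} [DecidableEq U] {P : Finset (Finset U)}

theorem card_blocks_le_card_sdiff (hdisj : (P : Set (Finset U)).PairwiseDisjoint id)
    {I : Finset U} (hI : ∀ B ∈ P, ¬ B ⊆ I) (X : Finset U) :
    #(P.filter (· ⊆ X)) ≤ #(X \ I) := by
  refine card_le_card_of_pairwiseDisjoint_of_inter_nonempty
    (hdisj.subset (filter_subset _ P)) fun B hB => ?_
  obtain ⟨hBP, hBX⟩ := mem_filter.1 hB
  obtain ⟨x, hxB, hxI⟩ := not_subset.1 (hI B hBP)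
  exact ⟨x, mem_inter.2 ⟨hxB, mem_sdiff.2 ⟨hBX hxB, hxI⟩⟩⟩

theorem card_blocks_le_card (hne : ∀ B ∈ P, B.Nonempty)
    (hdisj : (P : Set (Finset U)).PairwiseDisjoint id) (X : Finset U) :
    #(P.filter (· ⊆ X)) ≤ #X := by
  simpa using card_blocks_le_card_sdiff hdisj
    (fun B hB h => (hne B hB).ne_empty (subset_empty.1 h)) X

theorem exists_independent_subset_card_ge (hne : ∀ B ∈ P, B.Nonempty) (X : Finset U) :
    ∃ I ⊆ X, (∀ B ∈ P, ¬ B ⊆ I) ∧ #X - #(P.filter (· ⊆ X)) ≤ #I := by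
  choose pt hpt using fun B : P.filter (· ⊆ X) => hne B.1 (mem_filter.1 B.2).1
  have hS : #(univ.image pt) ≤ #(P.filter (· ⊆ X)) := card_image_le.trans (by simp)
  refine ⟨X \ univ.image pt, sdiff_subset, fun B hBP hB => ?_, ?_⟩
  · have hBX : B ⊆ X := hB.trans sdiff_subset
    have hpt' := hB (hpt ⟨B, mem_filter.2 ⟨hBP, hBX⟩⟩)
    exact (mem_sdiff.1 hpt').2 (mem_image_of_mem pt (mem_univ _))
  · exact (Nat.sub_le_sub_left hS _).trans (le_card_sdiff _ _)

theorem pcRank_eq_card_sub_card_blocks (hne : ∀ B ∈ P, B.Nonempty)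
    (hdisj : (P : Set (Finset U)).PairwiseDisjoint id) (X : Finset U) :
    pcRank P X = #X - #(P.filter (· ⊆ X)) := by
  refine le_antisymm (Finset.sup_le fun I hI => ?_) ?_
  · obtain ⟨hIX, hI⟩ := mem_filter.1 hI
    have hblocks := card_blocks_le_card_sdiff hdisj hI X
    rw [card_sdiff_of_subset (mem_powerset.1 hIX)] at hblocks
    have := card_le_card (mem_powerset.1 hIX)
    omega
  · obtain ⟨I, hIX, hI, hcard⟩ := exists_independent_subset_card_ge hne X
    exact hcard.trans (le_sup (f := card) (mem_filter.2 ⟨mem_powerset.2 hIX, hI⟩))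

theorem card_blocks_insert_le (hdisj : (P : Set (Finset U)).PairwiseDisjoint id)
    (u : U) (X : Finset U) :
    #(P.filter (· ⊆ insert u X)) ≤ #(P.filter (· ⊆ X)) + 1 := by
  have hthrough_u : ∀ B ∈ P.filter (· ⊆ insert u X) \ P.filter (· ⊆ X), B ∈ P ∧ u ∈ B := by
    intro B hB
    simp only [mem_sdiff, mem_filter, not_and] at hB
    obtain ⟨⟨hBP, hBuX⟩, hBX⟩ := hB
    refine ⟨hBP, by_contra fun hu => hBX hBP ?_⟩
    rwa [← erase_eq_of_notMem hu, ← subset_insert_iff]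
  have hle_one : #(P.filter (· ⊆ insert u X) \ P.filter (· ⊆ X)) ≤ 1 :=
    card_le_one.2 fun B hB B' hB' =>
      have ⟨hBP, huB⟩ := hthrough_u B hB
      have ⟨hB'P, huB'⟩ := hthrough_u B' hB'
      hdisj.elim hBP hB'P (not_disjoint_iff.2 ⟨u, huB, huB'⟩)
  grw [card_le_card_sdiff_add_card, hle_one, add_comm]

theorem mem_pcCl_iff_of_notMem [Fintype U] (hne : ∀ B ∈ P, B.Nonempty)
    (hdisj : (P : Set (Finset U)).PairwiseDisjoint id) {u : U} {X : Finset U} (hu : u ∉ X) :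
    u ∈ pcCl P X ↔ #(P.filter (· ⊆ insert u X)) = #(P.filter (· ⊆ X)) + 1 := by
  have hmono : #(P.filter (· ⊆ X)) ≤ #(P.filter (· ⊆ insert u X)) :=
    card_le_card fun B hB =>
      mem_filter.2 ⟨(mem_filter.1 hB).1, (mem_filter.1 hB).2.trans (subset_insert u X)⟩
  have hX := card_blocks_le_card hne hdisj X
  have hstep := card_blocks_insert_le hdisj u X
  simp only [pcCl, mem_filter, mem_univ, true_and, pcRank_eq_card_sub_card_blocks hne hdisj,
    card_insert_of_notMem hu]
  omega

end PartitionCircuitMatroid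

theorem stmt_12_general {U : Type*} [Fintype U] [DecidableEq U]
    (P : Finset (Finset U))
    (hne : ∀ B ∈ P, B.Nonempty)
    (hdisj : ∀ B ∈ P, ∀ B' ∈ P, B ≠ B' → Disjoint B B')
    (X : Finset U) :
    pcCl P X = X ∪ (Xᶜ.filter (fun x =>
      (P.filter (fun B => B ⊆ insert x X)).card = (P.filter (fun B => B ⊆ X)).card + 1)) := by
  ext u
  by_cases hu : u ∈ X
  · simp [pcCl, hu, insert_eq_of_mem hu]
  · simp [mem_pcCl_iff_of_notMem hne hdisj hu, hu]

theorem stmt_12 {U : Type*} [Fintype U] [DecidableEq U]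
    (P : Finset (Finset U))
    (hne : ∀ B ∈ P, B.Nonempty)
    (hdisj : ∀ B ∈ P, ∀ B' ∈ P, B ≠ B' → Disjoint B B')
    (hcov : P.biUnion id = Finset.univ)
    (X : Finset U) :
    pcCl P X = X ∪ (Xᶜ.filter (fun x =>
      (P.filter (fun B => B ⊆ insert x X)).card = (P.filter (fun B => B ⊆ X)).card + 1)) :=
  stmt_12_general P hne hdisj X
end

section
/- Let P be a partition of a finite set U and M_P the partition-circuit matroid induced by P. A set X ⊆ U is a closed set of M_P (i.e., cl(X) = X) if and only if for every x ∈ U, f̲(X ∪ {x}) = f̲(X). -/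
open Finset in
lemma pcRank_add {U : Type*} [DecidableEq U] (P : Finset (Finset U))
    (hne : ∀ B ∈ P, B.Nonempty)
    (hdisj : ∀ B ∈ P, ∀ B' ∈ P, B ≠ B' → Disjoint B B')
    (X : Finset U) :
    pcRank P X + (P.filter (fun B => B ⊆ X)).card = X.card := by
  classical
  set S := P.filter (fun B => B ⊆ X) with hS
  set rep : {B // B ∈ S} → U := fun B => (hne B.1 (mem_of_mem_filter _ B.2)).choose with hrep
  have hmem : ∀ B : {B // B ∈ S}, rep B ∈ B.1 :=
    fun B => (hne B.1 (mem_of_mem_filter _ B.2)).choose_spec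
  set T : Finset U := S.attach.image rep with hT
  have hTX : T ⊆ X := by
    intro t ht
    simp only [hT, mem_image] at ht
    obtain ⟨B, _, rfl⟩ := ht
    exact (mem_filter.mp B.2).2 (hmem B)
  have hinj : Function.Injective rep := by
    intro B B' h
    by_contra hne'
    have hBB : B.1 ≠ B'.1 := fun hh => hne' (Subtype.ext hh)
    have hd := hdisj B.1 (mem_of_mem_filter _ B.2) B'.1 (mem_of_mem_filter _ B'.2) hBB
    exact (Finset.disjoint_left.mp hd (hmem B)) (h ▸ hmem B')
  have hTcard : T.card = S.card := by
    rw [hT, card_image_of_injective _ hinj, card_attach]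
  have hind : ∀ B ∈ P, ¬ B ⊆ X \ T := by
    intro B hB hsub
    have hBX : B ⊆ X := hsub.trans sdiff_subset
    have hBS : B ∈ S := mem_filter.mpr ⟨hB, hBX⟩
    have hTmem : rep ⟨B, hBS⟩ ∈ T := mem_image.mpr ⟨⟨B, hBS⟩, mem_attach _ _, rfl⟩
    have h2 := hsub (hmem ⟨B, hBS⟩)
    rw [mem_sdiff] at h2
    exact h2.2 hTmem
  have hlow : X.card - S.card ≤ pcRank P X := by
    have hmem' : (X \ T) ∈ X.powerset.filter (fun I => ∀ B ∈ P, ¬ B ⊆ I) := by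
      simp only [mem_filter, mem_powerset]
      exact ⟨sdiff_subset, hind⟩
    have hle := Finset.le_sup (f := Finset.card) hmem'
    rwa [card_sdiff_of_subset hTX, hTcard] at hle
  have hup : pcRank P X ≤ X.card - S.card := by
    apply Finset.sup_le
    intro I hI
    simp only [mem_filter, mem_powerset] at hI
    obtain ⟨hIX, hIind⟩ := hI
    have hcardS : S.card ≤ (X \ I).card := by
      have hex : ∀ B ∈ S, ∃ b, b ∈ X \ I ∧ b ∈ B := by
        intro B hB
        have hBX := (mem_filter.mp hB).2
        have hBP := mem_of_mem_filter _ hB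
        obtain ⟨b, hbB, hbI⟩ := not_subset.mp (hIind B hBP)
        exact ⟨b, mem_sdiff.mpr ⟨hBX hbB, hbI⟩, hbB⟩
      choose g hg1 hg2 using hex
      rw [← card_attach (s := S)]
      apply Finset.card_le_card_of_injOn (fun B => g B.1 B.2) (fun B _ => hg1 B.1 B.2)
      intro B _ B' _ heq
      by_contra hne'
      have hBB : B.1 ≠ B'.1 := fun hh => hne' (Subtype.ext hh)
      have hd := hdisj B.1 (mem_of_mem_filter _ B.2) B'.1 (mem_of_mem_filter _ B'.2) hBB
      simp only at heq
      exact (disjoint_left.mp hd (hg2 B.1 B.2)) (heq ▸ hg2 B'.1 B'.2)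
    have hIcard : I.card ≤ X.card := card_le_card hIX
    have hsd : (X \ I).card = X.card - I.card := card_sdiff_of_subset hIX
    omega
  have hScard_le : S.card ≤ X.card := hTcard ▸ card_le_card hTX
  omega

open Finset in
lemma fcount_insert_le {U : Type*} [DecidableEq U] (P : Finset (Finset U))
    (hdisj : ∀ B ∈ P, ∀ B' ∈ P, B ≠ B' → Disjoint B B')
    (X : Finset U) (x : U) :
    (P.filter (fun B => B ⊆ insert x X)).card ≤ (P.filter (fun B => B ⊆ X)).card + 1 := by
  classical
  have h1 : (P.filter (fun B => B ⊆ insert x X)).card ≤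
      (P.filter (fun B => B ⊆ insert x X) \ P.filter (fun B => B ⊆ X)).card +
      (P.filter (fun B => B ⊆ X)).card := card_le_card_sdiff_add_card
  have h2 : (P.filter (fun B => B ⊆ insert x X) \ P.filter (fun B => B ⊆ X)).card ≤ 1 := by
    apply Finset.card_le_one.mpr
    intro B hB B' hB'
    have hxB : ∀ C ∈ P.filter (fun B => B ⊆ insert x X) \ P.filter (fun B => B ⊆ X),
        x ∈ C := by
      intro C hC
      rw [mem_sdiff, mem_filter, mem_filter] at hC
      obtain ⟨⟨hCP, hCins⟩, hCn⟩ := hC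
      obtain ⟨c, hcC, hcX⟩ := not_subset.mp (fun h => hCn ⟨hCP, h⟩)
      have := hCins hcC
      rw [mem_insert] at this
      rcases this with h | h
      · exact h ▸ hcC
      · exact absurd h hcX
    by_contra hne'
    have hBP := mem_of_mem_filter _ (mem_sdiff.mp hB).1
    have hB'P := mem_of_mem_filter _ (mem_sdiff.mp hB').1
    exact (disjoint_left.mp (hdisj B hBP B' hB'P hne') (hxB B hB)) (hxB B' hB')
  omega

theorem stmt_13 {U : Type*} [Fintype U] [DecidableEq U]
    (P : Finset (Finset U))
    (hne : ∀ B ∈ P, B.Nonempty)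
    (hdisj : ∀ B ∈ P, ∀ B' ∈ P, B ≠ B' → Disjoint B B')
    (hcov : P.biUnion id = Finset.univ)
    (X : Finset U) :
    pcCl P X = X ↔
      ∀ x : U, (P.filter (fun B => B ⊆ insert x X)).card = (P.filter (fun B => B ⊆ X)).card := by
  classical
  have key : ∀ Y, pcRank P Y + (P.filter (fun B => B ⊆ Y)).card = Y.card :=
    pcRank_add P hne hdisj
  constructor
  · intro hcl x
    by_cases hx : x ∈ X
    · rw [Finset.insert_eq_self.mpr hx]
    · have hx' : x ∉ pcCl P X := by rw [hcl]; exact hx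
      simp only [pcCl, Finset.mem_filter, Finset.mem_univ, true_and] at hx'
      have h1 := key (insert x X)
      have h2 := key X
      rw [Finset.card_insert_of_notMem hx] at h1
      have hmono : (P.filter (fun B => B ⊆ X)).card ≤
          (P.filter (fun B => B ⊆ insert x X)).card := by
        apply Finset.card_le_card
        intro B hB
        rw [Finset.mem_filter] at *
        exact ⟨hB.1, hB.2.trans (Finset.subset_insert _ _)⟩
      have hle := fcount_insert_le P hdisj X x
      omega
  · intro hf
    ext u
    simp only [pcCl, Finset.mem_filter, Finset.mem_univ, true_and]
    by_cases hu : u ∈ X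
    · simp [hu, Finset.insert_eq_self.mpr hu]
    · have h1 := key (insert u X)
      have h2 := key X
      rw [Finset.card_insert_of_notMem hu, hf u] at h1
      constructor
      · intro h; omega
      · intro h; exact absurd h hu
end

section
/- Let P be a partition of a finite set U and M_P the partition-circuit matroid induced by P. Then the independent sets of the dual matroid satisfy I_P* = {X ⊆ U : f̄(X) = |X|}, where f̄(X) = |{B ∈ P : B ∩ X ≠ ∅}|. -/
/-- Independence in the partition-circuit matroid induced by `P`. -/
def pcIndep {U : Type*} [DecidableEq U] (P : Finset (Finset U)) (X : Finset U) : Prop :=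
  ∀ B ∈ P, ¬ B ⊆ X

/-- Bases of the partition-circuit matroid: maximal independent sets. -/
def pcBase {U : Type*} [DecidableEq U] (P : Finset (Finset U)) (B : Finset U) : Prop :=
  pcIndep P B ∧ ∀ Y : Finset U, pcIndep P Y → B ⊆ Y → Y = B

/-- Independence in the dual matroid: contained in the complement of some base. -/
def pcDualIndep {U : Type*} [Fintype U] [DecidableEq U] (P : Finset (Finset U))
    (X : Finset U) : Prop :=
  ∃ B : Finset U, pcBase P B ∧ X ⊆ Bᶜ

/-!
The bases of `M_P` are exactly the complements of transversals of `P` (sets meeting every block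
in exactly one point): removing one point from each block kills every circuit, and adding back
any point recreates the block it lies in. Hence the dual-independent sets are the partial
transversals, i.e. the sets meeting each block at most once, and since the blocks partition `U`
this says precisely that `|X| = ∑_B |B ∩ X|` equals the number of blocks that `X` meets.
-/

open Finset

namespace PartitionCircuit

variable {U : Type*} [DecidableEq U] {P : Finset (Finset U)}

lemma eq_of_mem_of_mem (hdisj : ∀ B ∈ P, ∀ B' ∈ P, B ≠ B' → Disjoint B B')
    {B B' : Finset U} (hB : B ∈ P) (hB' : B' ∈ P) {x : U} (hxB : x ∈ B) (hxB' : x ∈ B') :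
    B = B' := by
  by_contra hne
  exact disjoint_left.1 (hdisj B hB B' hB' hne) hxB hxB'

lemma card_eq_sum_card_inter (hdisj : ∀ B ∈ P, ∀ B' ∈ P, B ≠ B' → Disjoint B B')
    (hcov : ∀ x, ∃ B ∈ P, x ∈ B) (X : Finset U) :
    #X = ∑ B ∈ P, #(B ∩ X) := by
  have hX : X = P.biUnion (· ∩ X) := by
    ext x
    simp only [mem_biUnion, mem_inter]
    obtain ⟨B, hB, hxB⟩ := hcov x
    exact ⟨fun hx => ⟨B, hB, hxB, hx⟩, fun ⟨_, _, _, hx⟩ => hx⟩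
  conv_lhs => rw [hX]
  refine card_biUnion fun B hB B' hB' hne => ?_
  exact (hdisj B hB B' hB' hne).mono inter_subset_left inter_subset_left

lemma card_filter_inter_nonempty_eq_card_iff
    (hdisj : ∀ B ∈ P, ∀ B' ∈ P, B ≠ B' → Disjoint B B')
    (hcov : ∀ x, ∃ B ∈ P, x ∈ B) (X : Finset U) :
    #(P.filter (fun B => (B ∩ X).Nonempty)) = #X ↔ ∀ B ∈ P, #(B ∩ X) ≤ 1 := by
  have hle : ∀ B ∈ P, (if (B ∩ X).Nonempty then 1 else 0) ≤ #(B ∩ X) := fun B _ => by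
    split_ifs with h
    exacts [card_pos.2 h, Nat.zero_le _]
  rw [card_filter, card_eq_sum_card_inter hdisj hcov, sum_eq_sum_iff_of_le hle]
  refine forall₂_congr fun B _ => ?_
  rcases (B ∩ X).eq_empty_or_nonempty with h | h
  · simp [h]
  · have := card_pos.2 h
    simp only [h, if_true]
    omega

lemma card_sdiff_le_one_of_pcBase (hdisj : ∀ B ∈ P, ∀ B' ∈ P, B ≠ B' → Disjoint B B')
    {T : Finset U} (hT : pcBase P T) {B : Finset U} (hB : B ∈ P) :
    #(B \ T) ≤ 1 := by
  refine card_le_one.2 fun a ha b hb => ?_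
  rw [mem_sdiff] at ha hb
  by_contra hab
  -- `insert a T` is still independent, because the only block containing `a` also contains `b`.
  have hind : pcIndep P (insert a T) := by
    intro B' hB' hsub
    by_cases haB' : a ∈ B'
    · obtain rfl := eq_of_mem_of_mem hdisj hB' hB haB' ha.1
      exact (mem_insert.1 (hsub hb.1)).elim (fun h => hab h.symm) hb.2
    · exact hT.1 B' hB' ((subset_insert_iff_of_notMem haB').1 hsub)
  exact ha.2 (hT.2 _ hind (subset_insert a T) ▸ mem_insert_self a T)

lemma pcBase_compl_of_card_inter_eq_one [Fintype U] (hcov : ∀ x, ∃ B ∈ P, x ∈ B)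
    {T : Finset U} (hT : ∀ B ∈ P, #(B ∩ T) = 1) : pcBase P Tᶜ := by
  refine ⟨fun B hB hsub => ?_, fun Y hY hTY => ?_⟩
  · obtain ⟨t, ht⟩ := card_pos.1 ((hT B hB).symm ▸ one_pos)
    rw [mem_inter] at ht
    exact mem_compl.1 (hsub ht.1) ht.2
  refine Subset.antisymm (fun y hyY => mem_compl.2 fun hyT => ?_) hTY
  obtain ⟨B, hB, hyB⟩ := hcov y
  obtain ⟨t, ht⟩ := card_eq_one.1 (hT B hB)
  have hBT : ∀ x ∈ B, x ∈ T → x = y := fun x hxB hxT => by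
    have hx : x ∈ B ∩ T := mem_inter.2 ⟨hxB, hxT⟩
    have hy : y ∈ B ∩ T := mem_inter.2 ⟨hyB, hyT⟩
    rw [ht, mem_singleton] at hx hy
    rw [hx, hy]
  refine hY B hB fun x hxB => ?_
  by_cases hxT : x ∈ T
  · rwa [hBT x hxB hxT]
  · exact hTY (mem_compl.2 hxT)

lemma exists_superset_card_inter_eq_one (hne : ∀ B ∈ P, B.Nonempty)
    (hdisj : ∀ B ∈ P, ∀ B' ∈ P, B ≠ B' → Disjoint B B')
    (hcov : ∀ x, ∃ B ∈ P, x ∈ B) {X : Finset U} (hX : ∀ B ∈ P, #(B ∩ X) ≤ 1) :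
    ∃ T, X ⊆ T ∧ ∀ B ∈ P, #(B ∩ T) = 1 := by
  have hrep : ∀ B ∈ P, ∃ c ∈ B, B ∩ X ⊆ {c} := fun B hB => by
    rcases (B ∩ X).eq_empty_or_nonempty with h | ⟨c, hc⟩
    · obtain ⟨c, hc⟩ := hne B hB
      exact ⟨c, hc, h ▸ empty_subset _⟩
    · refine ⟨c, (mem_inter.1 hc).1, fun x hx => ?_⟩
      exact mem_singleton.2 (card_le_one.1 (hX B hB) x hx c hc)
  choose c hcB hcX using hrep
  refine ⟨P.attach.image fun B => c B.1 B.2, fun x hx => ?_,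
    fun B hB => card_eq_one.2 ⟨c B hB, ?_⟩⟩
  · obtain ⟨B, hB, hxB⟩ := hcov x
    rw [mem_singleton.1 (hcX B hB (mem_inter.2 ⟨hxB, hx⟩))]
    exact mem_image.2 ⟨⟨B, hB⟩, mem_attach _ _, rfl⟩
  ext t
  simp only [mem_inter, mem_image, mem_attach, true_and, Subtype.exists, mem_singleton]
  constructor
  · rintro ⟨htB, B', hB', rfl⟩
    obtain rfl := eq_of_mem_of_mem hdisj hB hB' htB (hcB B' hB')
    rfl
  · rintro rfl
    exact ⟨hcB B hB, B, hB, rfl⟩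

end PartitionCircuit

open PartitionCircuit in
theorem stmt_15 {U : Type*} [Fintype U] [DecidableEq U]
    (P : Finset (Finset U))
    (hne : ∀ B ∈ P, B.Nonempty)
    (hdisj : ∀ B ∈ P, ∀ B' ∈ P, B ≠ B' → Disjoint B B')
    (hcov : P.biUnion id = Finset.univ)
    (X : Finset U) :
    pcDualIndep P X ↔ (P.filter (fun B => (B ∩ X).Nonempty)).card = X.card := by
  have hcov' : ∀ x, ∃ B ∈ P, x ∈ B := fun x => by
    have hx : x ∈ P.biUnion id := hcov ▸ mem_univ x
    simpa using hx
  rw [card_filter_inter_nonempty_eq_card_iff hdisj hcov']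
  constructor
  · rintro ⟨T, hT, hXT⟩ B hB
    refine (card_le_card fun x hx => ?_).trans (card_sdiff_le_one_of_pcBase hdisj hT hB)
    rw [mem_inter] at hx
    exact mem_sdiff.2 ⟨hx.1, mem_compl.1 (hXT hx.2)⟩
  · intro hX
    obtain ⟨T, hXT, hT⟩ := exists_superset_card_inter_eq_one hne hdisj hcov' hX
    exact ⟨Tᶜ, pcBase_compl_of_card_inter_eq_one hcov' hT, by rwa [compl_compl]⟩
end

section
/- Let P be a partition of a finite set U and M_P* the dual of the partition-circuit matroid induced by P. Then for all X ⊆ U, the closure operator of M_P* satisfies cl*(X) = {x ∈ U : f̄(X ∪ {x}) = f̄(X)}, where f̄(X) = |{B ∈ P : B ∩ X ≠ ∅}|. -/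
instance {U : Type*} [Fintype U] [DecidableEq U] (P : Finset (Finset U)) :
    DecidablePred (pcDualIndep P) := fun X => by
  unfold pcDualIndep pcBase pcIndep; infer_instance

/-- Rank function of the dual of the partition-circuit matroid. -/
def pcDualRank {U : Type*} [Fintype U] [DecidableEq U] (P : Finset (Finset U))
    (X : Finset U) : ℕ :=
  (X.powerset.filter (fun I => pcDualIndep P I)).sup Finset.card

/-- Closure operator of the dual matroid. -/
def pcDualCl {U : Type*} [Fintype U] [DecidableEq U] (P : Finset (Finset U))
    (X : Finset U) : Finset U :=
  Finset.univ.filter (fun u => pcDualRank P (insert u X) = pcDualRank P X)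

/-! The bases of `M_P` are exactly the complements of transversals of `P` (sets meeting every block
in exactly one element), so the independent sets of `M_P*` are the sets meeting every block in at
most one element. A largest such subset of `X` takes one element of `X` from each block that meets
`X`, hence `r*(X) = f̄(X)`, and the closure formula is the definition of `cl*` rewritten with it. -/

open Finset

section PartitionCircuit

variable {U : Type*} [DecidableEq U] {P : Finset (Finset U)}

/-- A block has at most one element outside a base: adding a second one could not complete
any block, contradicting maximality. -/
lemma pcBase.card_sdiff_le_one (hdisj : (P : Set (Finset U)).PairwiseDisjoint id) {Q : Finset U}
    (hQ : pcBase P Q) {B : Finset U} (hB : B ∈ P) : #(B \ Q) ≤ 1 := by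
  refine card_le_one.mpr fun x hx y hy => by_contra fun hxy => ?_
  rw [mem_sdiff] at hx hy
  have hindep : pcIndep P (insert x Q) := by
    intro B' hB' hsub
    by_cases hxB' : x ∈ B'
    · obtain rfl : B' = B := hdisj.elim_finset hB' hB x hxB' hx.1
      rcases mem_insert.mp (hsub hy.1) with h | h
      · exact hxy h.symm
      · exact hy.2 h
    · exact hQ.1 B' hB' fun v hv => (mem_insert.mp (hsub hv)).resolve_left
        fun hvx => hxB' (hvx ▸ hv)
  exact hx.2 (hQ.2 _ hindep (subset_insert x Q) ▸ mem_insert_self x Q)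

lemma pcDualIndep.card_inter_le_one [Fintype U]
    (hdisj : (P : Set (Finset U)).PairwiseDisjoint id) {I : Finset U} (hI : pcDualIndep P I)
    {B : Finset U} (hB : B ∈ P) : #(B ∩ I) ≤ 1 := by
  obtain ⟨Q, hQ, hIQ⟩ := hI
  refine (card_le_card fun u hu => ?_).trans (hQ.card_sdiff_le_one hdisj hB)
  rw [mem_inter] at hu
  exact mem_sdiff.mpr ⟨hu.1, mem_compl.mp (hIQ hu.2)⟩

lemma exists_mem_of_biUnion_eq_univ [Fintype U] (hcov : P.biUnion id = univ) (u : U) :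
    ∃ B ∈ P, u ∈ B := by
  simpa using (hcov ▸ mem_univ u : u ∈ P.biUnion id)

lemma pcBase_compl_of_card_inter_eq_one [Fintype U] (hcov : P.biUnion id = univ) {T : Finset U}
    (hT : ∀ B ∈ P, #(B ∩ T) = 1) : pcBase P Tᶜ := by
  refine ⟨fun B hB hsub => ?_, fun Y hY hsub => ?_⟩
  · have hempty : B ∩ T = ∅ :=
      disjoint_iff_inter_eq_empty.mp (subset_compl_iff_disjoint_right.mp hsub)
    simpa [hempty] using hT B hB
  refine Finset.Subset.antisymm (fun u huY => by_contra fun hu => ?_) hsub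
  obtain ⟨B, hB, huB⟩ := exists_mem_of_biUnion_eq_univ hcov u
  have huT : u ∈ B ∩ T := mem_inter.mpr ⟨huB, not_not.mp (mt mem_compl.mpr hu)⟩
  refine hY B hB fun v hv => ?_
  by_cases hvT : v ∈ T
  · rwa [card_le_one.mp (hT B hB).le v (mem_inter.mpr ⟨hv, hvT⟩) u huT]
  · exact hsub (mem_compl.mpr hvT)

lemma exists_superset_card_inter_eq_one [Fintype U] (hne : ∀ B ∈ P, B.Nonempty)
    (hdisj : (P : Set (Finset U)).PairwiseDisjoint id) (hcov : P.biUnion id = univ)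
    {I : Finset U} (hI : ∀ B ∈ P, #(B ∩ I) ≤ 1) :
    ∃ T, I ⊆ T ∧ ∀ B ∈ P, #(B ∩ T) = 1 := by
  have hchoice : ∀ B ∈ P, ∃ u ∈ B, (B ∩ I).Nonempty → u ∈ I := fun B hB => by
    by_cases hBI : (B ∩ I).Nonempty
    · obtain ⟨u, hu⟩ := hBI
      exact ⟨u, (mem_inter.mp hu).1, fun _ => (mem_inter.mp hu).2⟩
    · obtain ⟨u, hu⟩ := hne B hB
      exact ⟨u, hu, fun h => absurd h hBI⟩
  choose pick hpickB hpickI using hchoice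
  set T := P.attach.image fun B => pick B.1 B.2
  have hpickT : ∀ B (hB : B ∈ P), pick B hB ∈ T := fun B hB =>
    mem_image_of_mem _ (mem_attach P ⟨B, hB⟩)
  have hunique : ∀ B (hB : B ∈ P), ∀ v ∈ B ∩ T, v = pick B hB := fun B hB v hv => by
    obtain ⟨hvB, hvT⟩ := mem_inter.mp hv
    obtain ⟨⟨B', hB'⟩, -, rfl⟩ := mem_image.mp hvT
    obtain rfl : B' = B := hdisj.elim_finset hB' hB _ (hpickB B' hB') hvB
    rfl
  refine ⟨T, fun u hu => ?_, fun B hB => card_eq_one.mpr ⟨pick B hB,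
    eq_singleton_iff_unique_mem.mpr ⟨mem_inter.mpr ⟨hpickB B hB, hpickT B hB⟩, hunique B hB⟩⟩⟩
  obtain ⟨B, hB, huB⟩ := exists_mem_of_biUnion_eq_univ hcov u
  have hBI : u ∈ B ∩ I := mem_inter.mpr ⟨huB, hu⟩
  have hpick : pick B hB ∈ B ∩ I := mem_inter.mpr ⟨hpickB B hB, hpickI B hB ⟨u, hBI⟩⟩
  rw [card_le_one.mp (hI B hB) u hBI _ hpick]
  exact hpickT B hB

lemma pcDualIndep_of_card_inter_le_one [Fintype U] (hne : ∀ B ∈ P, B.Nonempty)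
    (hdisj : (P : Set (Finset U)).PairwiseDisjoint id) (hcov : P.biUnion id = univ)
    {I : Finset U} (hI : ∀ B ∈ P, #(B ∩ I) ≤ 1) : pcDualIndep P I := by
  obtain ⟨T, hIT, hT⟩ := exists_superset_card_inter_eq_one hne hdisj hcov hI
  exact ⟨Tᶜ, pcBase_compl_of_card_inter_eq_one hcov hT, (compl_compl T).symm ▸ hIT⟩

lemma card_le_card_filter_of_card_inter_le_one [Fintype U] (hcov : P.biUnion id = univ)
    {I X : Finset U} (hIX : I ⊆ X) (hI : ∀ B ∈ P, #(B ∩ I) ≤ 1) :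
    #I ≤ #(P.filter fun B => (B ∩ X).Nonempty) := by
  set F := P.filter fun B => (B ∩ X).Nonempty
  have hcover : I ⊆ F.biUnion (· ∩ I) := fun u hu => by
    obtain ⟨B, hB, huB⟩ := exists_mem_of_biUnion_eq_univ hcov u
    exact mem_biUnion.mpr ⟨B, mem_filter.mpr ⟨hB, u, mem_inter.mpr ⟨huB, hIX hu⟩⟩,
      mem_inter.mpr ⟨huB, hu⟩⟩
  calc #I ≤ #(F.biUnion (· ∩ I)) := card_le_card hcover
    _ ≤ ∑ B ∈ F, #(B ∩ I) := card_biUnion_le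
    _ ≤ #F := by simpa using sum_le_card_nsmul F _ 1 fun B hB => hI B (mem_filter.mp hB).1

lemma exists_subset_card_inter_le_one_card_eq (hdisj : (P : Set (Finset U)).PairwiseDisjoint id)
    (X : Finset U) : ∃ I ⊆ X, (∀ B ∈ P, #(B ∩ I) ≤ 1) ∧
      #I = #(P.filter fun B => (B ∩ X).Nonempty) := by
  set F := P.filter fun B => (B ∩ X).Nonempty
  choose pick hpick using fun B (hB : B ∈ F) => (mem_filter.mp hB).2
  have hpickB : ∀ B (hB : B ∈ F), pick B hB ∈ B := fun B hB => (mem_inter.mp (hpick B hB)).1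
  have hblock : ∀ B ∈ P, ∀ B' (hB' : B' ∈ F), pick B' hB' ∈ B → B' = B := fun B hB B' hB' h =>
    hdisj.elim_finset (mem_filter.mp hB').1 hB _ (hpickB B' hB') h
  refine ⟨F.attach.image fun B => pick B.1 B.2, image_subset_iff.mpr fun B _ =>
    (mem_inter.mp (hpick B.1 B.2)).2, fun B hB => card_le_one.mpr fun u hu v hv => ?_, ?_⟩
  · obtain ⟨huB, hu⟩ := mem_inter.mp hu
    obtain ⟨hvB, hv⟩ := mem_inter.mp hv
    obtain ⟨⟨Bu, hBu⟩, -, rfl⟩ := mem_image.mp hu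
    obtain ⟨⟨Bv, hBv⟩, -, rfl⟩ := mem_image.mp hv
    obtain rfl := hblock B hB Bu hBu huB
    obtain rfl := hblock Bu hB Bv hBv hvB
    rfl
  · rw [card_image_of_injective _ fun B B' h => Subtype.ext ?_, card_attach]
    exact hblock B' (mem_filter.mp B'.2).1 B.1 B.2 (h ▸ hpickB B'.1 B'.2)

lemma pcDualRank_eq_card_filter [Fintype U] (hne : ∀ B ∈ P, B.Nonempty)
    (hdisj : (P : Set (Finset U)).PairwiseDisjoint id) (hcov : P.biUnion id = univ)
    (X : Finset U) : pcDualRank P X = #(P.filter fun B => (B ∩ X).Nonempty) := by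
  refine le_antisymm (Finset.sup_le fun I hI => ?_) ?_
  · obtain ⟨hIX, hI⟩ := mem_filter.mp hI
    exact card_le_card_filter_of_card_inter_le_one hcov (mem_powerset.mp hIX)
      fun B hB => hI.card_inter_le_one hdisj hB
  · obtain ⟨I, hIX, hI, hcard⟩ := exists_subset_card_inter_le_one_card_eq hdisj X
    rw [← hcard]
    exact le_sup (f := card) (mem_filter.mpr
      ⟨mem_powerset.mpr hIX, pcDualIndep_of_card_inter_le_one hne hdisj hcov hI⟩)

end PartitionCircuit

theorem stmt_17 {U : Type*} [Fintype U] [DecidableEq U]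
    (P : Finset (Finset U))
    (hne : ∀ B ∈ P, B.Nonempty)
    (hdisj : ∀ B ∈ P, ∀ B' ∈ P, B ≠ B' → Disjoint B B')
    (hcov : P.biUnion id = Finset.univ)
    (X : Finset U) :
    pcDualCl P X = Finset.univ.filter (fun x =>
      (P.filter (fun B => (B ∩ insert x X).Nonempty)).card
        = (P.filter (fun B => (B ∩ X).Nonempty)).card) := by
  have hdisj' : (P : Set (Finset U)).PairwiseDisjoint id := fun B hB B' hB' => hdisj B hB B' hB'
  ext x
  simp only [pcDualCl, mem_filter, mem_univ, true_and]
  rw [pcDualRank_eq_card_filter hne hdisj' hcov, pcDualRank_eq_card_filter hne hdisj' hcov]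
end
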